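/- Define a linear order < on the positive roots R⁺ of type C_n as follows: group the roots by their smallest index i (i.e., the roots ε_i − ε_j (i<j), 2ε_i, ε_i + ε_j (i<j)), order the groups by increasing i, and within the group of index i set ε_i − ε_{i+1} < ε_i − ε_{i+2} < ⋯ < ε_i − ε_n < 2ε_i < ε_i + ε_n < ε_i + ε_{n−1} < ⋯ < ε_i + ε_{i+1}. Then this order is convex: for all β, γ ∈ R⁺ with β < γ and β + γ ∈ R⁺, one has β < β + γ < γ. -/

import Mathlib

/-- The positive roots of type `C_n`: `ε_i - ε_j` and `ε_i + ε_j` for `i < j`, and `2ε_i`. -/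
inductive CnRoot (n : ℕ) where
  | sub (i j : Fin n) (h : i < j)
  | dbl (i : Fin n)
  | add (i j : Fin n) (h : i < j)

/-- The vector in `ℝ^n` corresponding to a positive root of type `C_n`. -/
def CnRoot.toVec {n : ℕ} : CnRoot n → (Fin n → ℝ)
  | .sub i j _ => Pi.single i 1 - Pi.single j 1
  | .dbl i => (2 : ℝ) • (Pi.single i 1 : Fin n → ℝ)
  | .add i j _ => Pi.single i 1 + Pi.single j 1

/-- The rank function realizing the order: roots are grouped by their smallest index `i`
(groups ordered by increasing `i`), and within the group of index `i` the order is
`ε_i - ε_{i+1} < ⋯ < ε_i - ε_n < 2ε_i < ε_i + ε_n < ⋯ < ε_i + ε_{i+1}`. -/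
def CnRoot.key {n : ℕ} : CnRoot n → ℕ
  | .sub i j _ => i.val * (2 * n) + j.val
  | .dbl i => i.val * (2 * n) + n
  | .add i j _ => i.val * (2 * n) + (2 * n - j.val)

/-!
Every positive root `r` has a leading index `r.fst`, the smallest index occurring in it: its
coefficient there is positive and all earlier coefficients vanish. So if `γ = α + β`, then
`γ.fst = min α.fst β.fst`, and `key` compares `(fst, offset)` lexicographically.
If `α.fst < β.fst`, then `γ` lies in the group of `α`, hence before `β`; it lies after `α`
because `β = γ - α` is positive, and `ε_p - ε_q` is positive only for `p < q`.
If `α.fst = β.fst = i`, the coefficient of `ε_i` forces `γ = 2ε_i`, and the coordinate sum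
forces `{α, β} = {ε_i - ε_j, ε_i + ε_k}`, between which `2ε_i` sits.
-/

namespace CnRoot

variable {n : ℕ}

def fst : CnRoot n → Fin n
  | sub i _ _ | dbl i | add i _ _ => i

def offset : CnRoot n → ℕ
  | sub _ j _ => j
  | dbl _ => n
  | add _ j _ => 2 * n - j

theorem key_eq (r : CnRoot n) : r.key = r.fst * (2 * n) + r.offset := by
  cases r <;> rfl

theorem offset_lt (r : CnRoot n) : r.offset < 2 * n := by
  rcases r with ⟨i, j, h⟩ | i | ⟨i, j, h⟩ <;> have := i.pos <;>
    simp only [offset] <;> omega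

theorem key_lt_key_of_fst_lt {a b : CnRoot n} (h : a.fst < b.fst) : a.key < b.key := by
  have h' : (a.fst : ℕ) + 1 ≤ b.fst := h
  calc a.key < (a.fst + 1) * (2 * n) := by
        rw [key_eq, add_one_mul]
        exact Nat.add_lt_add_left a.offset_lt _
    _ ≤ b.fst * (2 * n) := Nat.mul_le_mul_right _ h'
    _ ≤ b.key := by rw [key_eq]; exact Nat.le_add_right _ _

theorem key_lt_key_of_offset_lt {a b : CnRoot n} (h : a.fst = b.fst) (ho : a.offset < b.offset) :
    a.key < b.key := by
  rw [key_eq, key_eq, h]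
  exact Nat.add_lt_add_left ho _

theorem eq_of_fst_eq_of_offset_eq {a b : CnRoot n} (h : a.fst = b.fst) (ho : a.offset = b.offset) :
    a = b := by
  cases a <;> cases b <;> simp only [fst, offset, sub.injEq, dbl.injEq, add.injEq] at h ho ⊢ <;>
    omega

theorem key_injective : Function.Injective (key (n := n)) := by
  intro a b h
  have hfst : a.fst = b.fst := by
    by_contra hne
    rcases lt_or_gt_of_ne hne with hlt | hlt
    exacts [(key_lt_key_of_fst_lt hlt).ne h, (key_lt_key_of_fst_lt hlt).ne' h]
  rw [key_eq, key_eq, hfst] at h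
  exact eq_of_fst_eq_of_offset_eq hfst (Nat.add_left_cancel h)

theorem toVec_sub_apply_left (i j : Fin n) (h : i < j) : (sub i j h).toVec i = 1 := by
  simp [toVec, h.ne]

theorem toVec_dbl_apply (i : Fin n) : (dbl i).toVec i = 2 := by
  simp [toVec]

theorem toVec_add_apply_left (i j : Fin n) (h : i < j) : (add i j h).toVec i = 1 := by
  simp [toVec, h.ne]

theorem sum_toVec_sub (i j : Fin n) (h : i < j) : ∑ k, (sub i j h).toVec k = 0 := by
  simp [toVec, Finset.sum_sub_distrib]

theorem sum_toVec_dbl (i : Fin n) : ∑ k, (dbl i).toVec k = 2 := by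
  simp [toVec, ← Finset.mul_sum]

theorem sum_toVec_add (i j : Fin n) (h : i < j) : ∑ k, (add i j h).toVec k = 2 := by
  norm_num [toVec, Finset.sum_add_distrib]

theorem toVec_apply_of_lt_fst {r : CnRoot n} {k : Fin n} (hk : k < r.fst) : r.toVec k = 0 := by
  rcases r with ⟨i, j, h⟩ | i | ⟨i, j, h⟩ <;> simp only [fst] at hk
  · simp [toVec, hk.ne, (hk.trans h).ne]
  · simp [toVec, hk.ne]
  · simp [toVec, hk.ne, (hk.trans h).ne]

theorem one_le_toVec_apply_fst (r : CnRoot n) : 1 ≤ r.toVec r.fst := by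
  cases r <;> simp [fst, toVec_sub_apply_left, toVec_dbl_apply, toVec_add_apply_left]

theorem eq_dbl_of_two_le_toVec_apply_fst {r : CnRoot n} (h : 2 ≤ r.toVec r.fst) :
    r = dbl r.fst := by
  cases r <;> simp [fst, toVec_sub_apply_left, toVec_add_apply_left] at h ⊢

theorem fst_le_of_toVec_apply_ne_zero {r : CnRoot n} {k : Fin n} (hk : r.toVec k ≠ 0) :
    r.fst ≤ k :=
  not_lt.mp fun hlt => hk (toVec_apply_of_lt_fst hlt)

theorem toVec_apply_nonneg_of_le_fst {r : CnRoot n} {k : Fin n} (hk : k ≤ r.fst) :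
    0 ≤ r.toVec k := by
  rcases hk.lt_or_eq with hlt | rfl
  · exact (toVec_apply_of_lt_fst hlt).ge
  · exact zero_le_one.trans r.one_le_toVec_apply_fst

theorem fst_eq_min_of_toVec_eq_add {a b c : CnRoot n} (hc : c.toVec = a.toVec + b.toVec) :
    c.fst = min a.fst b.fst := by
  have hcoord (k : Fin n) : c.toVec k = a.toVec k + b.toVec k := by rw [hc, Pi.add_apply]
  refine le_antisymm (fst_le_of_toVec_apply_ne_zero (ne_of_gt ?_)) (not_lt.mp fun hlt => ?_)
  · rw [hcoord]
    rcases min_choice a.fst b.fst with h | h <;> rw [h]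
    · have := toVec_apply_nonneg_of_le_fst (h ▸ min_le_right a.fst b.fst)
      linarith [a.one_le_toVec_apply_fst]
    · have := toVec_apply_nonneg_of_le_fst (h ▸ min_le_left a.fst b.fst)
      linarith [b.one_le_toVec_apply_fst]
  · have := c.one_le_toVec_apply_fst
    rw [hcoord, toVec_apply_of_lt_fst (hlt.trans_le (min_le_left _ _)),
      toVec_apply_of_lt_fst (hlt.trans_le (min_le_right _ _))] at this
    norm_num at this

theorem lt_of_toVec_eq_single_sub_single {r : CnRoot n} {p q : Fin n}
    (h : r.toVec = Pi.single p 1 - Pi.single q 1) : p < q := by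
  have hpos := r.one_le_toVec_apply_fst
  have hfst : r.fst = p := by
    by_contra hne
    rw [h] at hpos
    simp only [Pi.sub_apply, Pi.single_apply, hne, if_false] at hpos
    split_ifs at hpos <;> norm_num at hpos
  have hpq : p ≠ q := by
    rintro rfl
    rw [h, sub_self] at hpos
    norm_num at hpos
  have hq : r.toVec q ≠ 0 := by simp [h, hpq.symm]
  exact lt_of_le_of_ne (hfst ▸ fst_le_of_toVec_apply_ne_zero hq) hpq

theorem key_lt_key_lt_of_fst_lt {a b c : CnRoot n} (hab : a.fst < b.fst)
    (hc : c.toVec = a.toVec + b.toVec) : a.key < c.key ∧ c.key < b.key := by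
  have hca : c.fst = a.fst := by rw [fst_eq_min_of_toVec_eq_add hc, min_eq_left hab.le]
  refine ⟨key_lt_key_of_offset_lt hca.symm ?_, key_lt_key_of_fst_lt (hca ▸ hab)⟩
  have hb : b.toVec = c.toVec - a.toVec := eq_sub_of_add_eq' hc.symm
  have hlead : c.toVec a.fst = a.toVec a.fst := by
    rw [hc, Pi.add_apply, toVec_apply_of_lt_fst hab, add_zero]
  have hsum : ∑ k, c.toVec k = ∑ k, a.toVec k + ∑ k, b.toVec k := by
    simp only [hc, Pi.add_apply, Finset.sum_add_distrib]
  rcases a with ⟨i, j, hij⟩ | i | ⟨i, j, hij⟩ <;>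
    rcases c with ⟨i', s, his⟩ | i' | ⟨i', s, his⟩ <;>
    simp only [fst] at hca <;> subst hca <;>
    simp only [fst, toVec_sub_apply_left, toVec_dbl_apply, toVec_add_apply_left] at hlead <;>
    norm_num at hlead <;> simp only [offset]
  case sub.sub =>
    have : b.toVec = Pi.single j 1 - Pi.single s 1 := by rw [hb]; simp only [toVec]; abel
    exact lt_of_toVec_eq_single_sub_single this
  case sub.add => omega
  case dbl.dbl =>
    have := b.one_le_toVec_apply_fst
    rw [hb, sub_self] at this
    norm_num at this
  case add.sub =>
    rcases b with ⟨p, q, hpq⟩ | p | ⟨p, q, hpq⟩ <;>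
      simp only [sum_toVec_sub, sum_toVec_dbl, sum_toVec_add] at hsum <;> norm_num at hsum
  case add.add =>
    have : b.toVec = Pi.single s 1 - Pi.single j 1 := by rw [hb]; simp only [toVec]; abel
    have := lt_of_toVec_eq_single_sub_single this
    omega

theorem key_between_of_fst_eq {a b c : CnRoot n} (hab : a.fst = b.fst)
    (hc : c.toVec = a.toVec + b.toVec) :
    (a.key < c.key ∧ c.key < b.key) ∨ (b.key < c.key ∧ c.key < a.key) := by
  have hca : c.fst = a.fst := by rw [fst_eq_min_of_toVec_eq_add hc, ← hab, min_self]
  have hlead : c.toVec a.fst = a.toVec a.fst + b.toVec a.fst := by rw [hc, Pi.add_apply]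
  have hcd : c = dbl a.fst := by
    refine hca ▸ eq_dbl_of_two_le_toVec_apply_fst ?_
    have := b.one_le_toVec_apply_fst
    rw [hca, hlead, hab]
    linarith [hab ▸ a.one_le_toVec_apply_fst]
  have hsum : ∑ k, c.toVec k = ∑ k, a.toVec k + ∑ k, b.toVec k := by
    simp only [hc, Pi.add_apply, Finset.sum_add_distrib]
  subst hcd
  rcases a with ⟨i, j, hij⟩ | i | ⟨i, j, hij⟩ <;>
    rcases b with ⟨i', p, hip⟩ | i' | ⟨i', p, hip⟩ <;>
    simp only [fst] at hab <;> subst hab <;>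
    simp only [fst, toVec_sub_apply_left, toVec_dbl_apply, toVec_add_apply_left] at hlead <;>
    simp only [sum_toVec_sub, sum_toVec_dbl, sum_toVec_add] at hsum
  case sub.add =>
    refine .inl ⟨key_lt_key_of_offset_lt rfl j.isLt, key_lt_key_of_offset_lt rfl ?_⟩
    simp only [offset]
    omega
  case add.sub =>
    refine .inr ⟨key_lt_key_of_offset_lt rfl p.isLt, key_lt_key_of_offset_lt rfl ?_⟩
    simp only [offset]
    omega
  all_goals linarith

end CnRoot

/-- The order on the positive roots of type `C_n` given by `CnRoot.key` is a linear
order (the key function is injective) and it is convex: whenever `β < γ` and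
`β + γ` is again a positive root, one has `β < β + γ < γ`. -/
theorem convex_order_typeC (n : ℕ) :
    Function.Injective (CnRoot.key (n := n)) ∧
    ∀ a b c : CnRoot n, a.key < b.key → c.toVec = a.toVec + b.toVec →
      a.key < c.key ∧ c.key < b.key := by
  refine ⟨CnRoot.key_injective, fun a b c hab hc => ?_⟩
  rcases lt_trichotomy a.fst b.fst with hlt | heq | hgt
  · exact CnRoot.key_lt_key_lt_of_fst_lt hlt hc
  · exact (CnRoot.key_between_of_fst_eq heq hc).resolve_right
      fun hba => (hba.1.trans hba.2).not_gt hab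
  · have hba := CnRoot.key_lt_key_lt_of_fst_lt hgt (hc.trans (add_comm _ _))
    exact absurd hab (hba.1.trans hba.2).not_gt
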